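/- arXiv:math/0401330 — 8 statements merged into one kernel-verified Lean document; each statement's English description precedes it below -/
import Mathlib

section
/- In the q-rook monoid algebra R_k(q), for indices i ≤ j we have P_i P_j = P_j P_i = P_j. -/
/-!
Relation (R5) expresses `P (m+1)` as a linear combination of products that begin with `P m`.
Hence any element absorbed by `P m` on the left is also absorbed by `P (m+1)`; starting from
the idempotent `P i`, induction on `j` gives `P i * P j = P j`, and commutativity (R2) gives the
other order.
-/

section RookAbsorption

variable {R A : Type*} [CommSemiring R] [Ring A] [Algebra R A]

theorem mul_smul_sub_eq_of_mul_eq {x p : A} (t : A) (c d : R) (h : x * p = p) :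
    x * (c • (p * t * p - d • p)) = c • (p * t * p - d • p) := by
  rw [mul_smul_comm, mul_sub, mul_smul_comm, ← mul_assoc, ← mul_assoc, h]

theorem mul_eq_right_of_le_of_recurrence {P T : ℕ → A} {c d : R} {i k : ℕ}
    (hidem : P i * P i = P i)
    (hrec : ∀ m, i ≤ m → m + 1 ≤ k → P (m + 1) = c • (P m * T m * P m - d • P m)) :
    ∀ j, i ≤ j → j ≤ k → P i * P j = P j := by
  intro j hij
  induction j, hij using Nat.le_induction with
  | base => exact fun _ => hidem
  | succ m him ih =>
    intro hmk
    rw [hrec m him hmk]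
    exact mul_smul_sub_eq_of_mul_eq _ _ _ (ih (Nat.le_of_succ_le hmk))

end RookAbsorption

theorem stmt0_general {A : Type*} [Ring A] [Algebra ℂ A] (k : ℕ) (q : ℂ)
    (T P : ℕ → A)
    (hR1 : ∀ i, 1 ≤ i → i ≤ k → P i * P i = P i)
    (hR2 : ∀ i j, 1 ≤ i → i ≤ k → 1 ≤ j → j ≤ k → P i * P j = P j * P i)
    (hR5 : ∀ i, 1 ≤ i → i + 1 ≤ k → P (i+1) = q • (P i * T i * P i - (q - q⁻¹) • P i)) :
    ∀ i j, 1 ≤ i → i ≤ j → j ≤ k → P i * P j = P j ∧ P j * P i = P j := by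
  intro i j hi hij hjk
  have hik : i ≤ k := hij.trans hjk
  have hleft : P i * P j = P j :=
    mul_eq_right_of_le_of_recurrence (T := T) (hR1 i hi hik)
      (fun m him hmk => hR5 m (hi.trans him) hmk) j hij hjk
  exact ⟨hleft, by rw [← hR2 i j hi hik (hi.trans hij) hjk, hleft]⟩

/-- In the q-rook monoid algebra `R_k(q)` (given by its presentation via generators
`P_1,…,P_k`, `T_1,…,T_{k-1}` and relations (A1)-(A3), (R1)-(R5)), for `i ≤ j` we have
`P_i P_j = P_j P_i = P_j`. -/
theorem stmt0 {A : Type*} [Ring A] [Algebra ℂ A] (k : ℕ) (q : ℂ) (hq : q ≠ 0)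
    (T P : ℕ → A)
    (hA1 : ∀ i, 1 ≤ i → i + 1 ≤ k → T i * T i = (q - q⁻¹) • T i + 1)
    (hA2 : ∀ i, 1 ≤ i → i + 2 ≤ k → T i * T (i+1) * T i = T (i+1) * T i * T (i+1))
    (hA3 : ∀ i j, 1 ≤ i → i + 1 < j → j + 1 ≤ k → T i * T j = T j * T i)
    (hR1 : ∀ i, 1 ≤ i → i ≤ k → P i * P i = P i)
    (hR2 : ∀ i j, 1 ≤ i → i ≤ k → 1 ≤ j → j ≤ k → P i * P j = P j * P i)
    (hR3 : ∀ i j, 1 ≤ i → i < j → j + 1 ≤ k → P i * T j = T j * P i)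
    (hR4 : ∀ i j, 1 ≤ j → j < i → i ≤ k → P i * T j = q • P i ∧ T j * P i = q • P i)
    (hR5 : ∀ i, 1 ≤ i → i + 1 ≤ k → P (i+1) = q • (P i * T i * P i - (q - q⁻¹) • P i)) :
    ∀ i j, 1 ≤ i → i ≤ j → j ≤ k → P i * P j = P j ∧ P j * P i = P j :=
  stmt0_general k q T P hR1 hR2 hR5
end

section
/- In the q-rook monoid algebra R_k(q) with k ≥ 2, setting X_1 = 1 − P_1, we have the commutation relation X_1 T_1 X_1 T_1 = T_1 X_1 T_1 X_1. -/
/-!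
Write `X = 1 - P` and `c = q - q⁻¹`. Expanding, `X T X T - T X T X` is the sum of
`T² P - P T²` and `P T P T - T P T P`. The quadratic relation turns the first into
`c (T P - P T)`. Up to the factor `q`, `P₂` is `P₁ T₁ P₁ - c P₁`, and `P₂` commutes with `T₁`
because both products equal `q P₂`; so the second is `c (P T - T P)` and the two cancel.
-/

theorem one_sub_mul_sq_eq_mul_one_sub_sq {R A : Type*} [CommRing R] [Ring A] [Algebra R A]
    (c : R) (T P : A) (hT : T * T = c • T + 1) (hPTP : Commute (P * T * P - c • P) T) :
    (1 - P) * T * (1 - P) * T = T * (1 - P) * T * (1 - P) := by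
  have hsq : T * T * P - P * (T * T) = c • (T * P) - c • (P * T) := by
    rw [hT, add_mul, mul_add, one_mul, mul_one, smul_mul_assoc, mul_smul_comm]
    abel
  have hcube : P * T * P * T - T * (P * T * P) = c • (P * T) - c • (T * P) := by
    have h := hPTP.eq
    simp only [sub_mul, mul_sub, smul_mul_assoc, mul_smul_comm] at h
    rw [sub_eq_sub_iff_sub_eq_sub, h]
  rw [← sub_eq_zero]
  calc (1 - P) * T * (1 - P) * T - T * (1 - P) * T * (1 - P)
      = (T * T * P - P * (T * T)) + (P * T * P * T - T * (P * T * P)) := by noncomm_ring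
    _ = 0 := by rw [hsq, hcube]; abel

theorem stmt3_general {A : Type*} [Ring A] [Algebra ℂ A] (k : ℕ) (hk : 2 ≤ k) (q : ℂ) (hq : q ≠ 0)
    (T P : ℕ → A)
    (hA1 : ∀ i, 1 ≤ i → i + 1 ≤ k → T i * T i = (q - q⁻¹) • T i + 1)
    (hR4 : ∀ i j, 1 ≤ j → j < i → i ≤ k → P i * T j = q • P i ∧ T j * P i = q • P i)
    (hR5 : ∀ i, 1 ≤ i → i + 1 ≤ k → P (i+1) = q • (P i * T i * P i - (q - q⁻¹) • P i)) :
    ∀ X1 : A, X1 = 1 - P 1 →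
      X1 * T 1 * X1 * T 1 = T 1 * X1 * T 1 * X1 := by
  rintro X1 rfl
  obtain ⟨hP2T, hTP2⟩ := hR4 2 1 le_rfl one_lt_two hk
  have hP2 : Commute (P 2) (T 1) := hP2T.trans hTP2.symm
  rw [hR5 1 le_rfl hk] at hP2
  refine one_sub_mul_sq_eq_mul_one_sub_sq (q - q⁻¹) (T 1) (P 1) (hA1 1 le_rfl hk) ?_
  simpa only [inv_smul_smul₀ hq] using hP2.smul_left q⁻¹

/-- In the q-rook monoid algebra `R_k(q)` with `k ≥ 2`, setting `X_1 = 1 - P_1`,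
we have `X_1 T_1 X_1 T_1 = T_1 X_1 T_1 X_1`. -/
theorem stmt3 {A : Type*} [Ring A] [Algebra ℂ A] (k : ℕ) (hk : 2 ≤ k) (q : ℂ) (hq : q ≠ 0)
    (T P : ℕ → A)
    (hA1 : ∀ i, 1 ≤ i → i + 1 ≤ k → T i * T i = (q - q⁻¹) • T i + 1)
    (hA2 : ∀ i, 1 ≤ i → i + 2 ≤ k → T i * T (i+1) * T i = T (i+1) * T i * T (i+1))
    (hA3 : ∀ i j, 1 ≤ i → i + 1 < j → j + 1 ≤ k → T i * T j = T j * T i)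
    (hR1 : ∀ i, 1 ≤ i → i ≤ k → P i * P i = P i)
    (hR2 : ∀ i j, 1 ≤ i → i ≤ k → 1 ≤ j → j ≤ k → P i * P j = P j * P i)
    (hR3 : ∀ i j, 1 ≤ i → i < j → j + 1 ≤ k → P i * T j = T j * P i)
    (hR4 : ∀ i j, 1 ≤ j → j < i → i ≤ k → P i * T j = q • P i ∧ T j * P i = q • P i)
    (hR5 : ∀ i, 1 ≤ i → i + 1 ≤ k → P (i+1) = q • (P i * T i * P i - (q - q⁻¹) • P i)) :
    ∀ X1 : A, X1 = 1 - P 1 →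
      X1 * T 1 * X1 * T 1 = T 1 * X1 * T 1 * X1 :=
  stmt3_general k hk q hq T P hA1 hR4 hR5
end

section
/- Let A be an associative unital ℂ-algebra containing elements T_1, P_1 with T_1² = (q−q⁻¹)T_1 + 1, P_1² = P_1, and define P_2 = q(P_1 T_1 P_1 − (q−q⁻¹)P_1), X_1 = 1 − P_1, X_2 = T_1 X_1 T_1. Then the identity X_1 T_1 X_1 T_1 = T_1 X_1 T_1 X_1 holds if and only if P_2 T_1 = T_1 P_2. -/
/-!
Write `X = 1 - P` and `Z = P T P - c P` with `c = q - q⁻¹`, so that `P₂ = q Z`. Expanding,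
`X T X = (T - Y) + Z` with `Y = P T + T P - c P`, and `Y` commutes with `T` because the Hecke
relation gives `P T² - T² P = c (P T - T P)`. Hence `X T X` commutes with `T` iff `Z` does,
iff `P₂ = q Z` does, as `q ≠ 0`.
-/

section Hecke

variable {R A : Type*} [CommRing R] [Ring A] [Algebra R A] {c : R} {T : A}

theorem commute_mul_add_mul_sub_smul_of_mul_self (hT : T * T = c • T + 1) (P : A) :
    Commute (P * T + T * P - c • P) T := by
  calc (P * T + T * P - c • P) * T
      = P * (T * T) + T * P * T - c • (P * T) := by noncomm_ring
    _ = P + T * P * T := by rw [hT]; noncomm_ring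
    _ = T * T * P + T * (P * T) - c • (T * P) := by rw [hT]; noncomm_ring
    _ = T * (P * T + T * P - c • P) := by noncomm_ring

theorem commute_one_sub_mul_mul_one_sub_iff (hT : T * T = c • T + 1) (P : A) :
    Commute ((1 - P) * T * (1 - P)) T ↔ Commute (P * T * P - c • P) T := by
  have hW : Commute (T - (P * T + T * P - c • P)) T :=
    (Commute.refl T).sub_left (commute_mul_add_mul_sub_smul_of_mul_self hT P)
  have hsplit : (1 - P) * T * (1 - P) = (T - (P * T + T * P - c • P)) + (P * T * P - c • P) := by
    noncomm_ring
  rw [hsplit]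
  refine ⟨fun h => ?_, hW.add_left⟩
  simpa only [add_sub_cancel_left] using h.sub_left hW

end Hecke

theorem stmt5_general {A : Type*} [Ring A] [Algebra ℂ A] (q : ℂ) (hq : q ≠ 0)
    (T1 P1 : A)
    (hT : T1 * T1 = (q - q⁻¹) • T1 + 1) :
    ∀ P2 X1 X2 : A,
      P2 = q • (P1 * T1 * P1 - (q - q⁻¹) • P1) →
      X1 = 1 - P1 → X2 = T1 * X1 * T1 →
      (X1 * T1 * X1 * T1 = T1 * X1 * T1 * X1 ↔ P2 * T1 = T1 * P2) := by
  rintro P2 X1 - rfl rfl -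
  have hbraid : (1 - P1) * T1 * (1 - P1) * T1 = T1 * (1 - P1) * T1 * (1 - P1)
      ↔ Commute ((1 - P1) * T1 * (1 - P1)) T1 := by
    simp only [Commute, SemiconjBy, mul_assoc]
  rw [hbraid, commute_one_sub_mul_mul_one_sub_iff hT P1, ← Commute.smul_left_iff₀ hq]
  rfl

/-- In an associative unital ℂ-algebra with `T_1² = (q - q⁻¹)T_1 + 1` and `P_1² = P_1`,
setting `P_2 = q(P_1 T_1 P_1 - (q - q⁻¹)P_1)`, `X_1 = 1 - P_1`, `X_2 = T_1 X_1 T_1`,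
we have `X_1 T_1 X_1 T_1 = T_1 X_1 T_1 X_1` iff `P_2 T_1 = T_1 P_2`. -/
theorem stmt5 {A : Type*} [Ring A] [Algebra ℂ A] (q : ℂ) (hq : q ≠ 0)
    (T1 P1 : A)
    (hT : T1 * T1 = (q - q⁻¹) • T1 + 1)
    (hP : P1 * P1 = P1) :
    ∀ P2 X1 X2 : A,
      P2 = q • (P1 * T1 * P1 - (q - q⁻¹) • P1) →
      X1 = 1 - P1 → X2 = T1 * X1 * T1 →
      (X1 * T1 * X1 * T1 = T1 * X1 * T1 * X1 ↔ P2 * T1 = T1 * P2) :=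
  stmt5_general q hq T1 P1 hT
end

section
/- Let A be an associative unital ℂ-algebra with elements T_1, P_1 satisfying T_1² = (q−q⁻¹)T_1 + 1 and P_1² = P_1, and define P_2 = q(P_1 T_1 P_1 − (q−q⁻¹)P_1), X_1 = 1 − P_1, X_2 = T_1 X_1 T_1. Then (1 − X_1)(T_1 − q)(1 − X_2)(1 − X_1) = q⁻³(P_2 − P_2²). In particular, (1−X_1)(T_1−q)(1−X_2)(1−X_1) = 0 if and only if P_2² = P_2. -/
/-!
Since `1 - X₁ = P₁` and `T₁ (T₁ - q) = 1 - q⁻¹ T₁`, the left-hand side collapses to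
`P₁ (1 - q⁻¹ T₁)(P₁ T₁ - (q - q⁻¹)) P₁ = F - q⁻¹ P₁ T₁ F` with `F = P₁ T₁ P₁ - (q - q⁻¹) P₁ = q⁻¹ P₂`.
As `F = P₁ F`, we get `P₁ T₁ F = (P₁ T₁ P₁) F = F² + (q - q⁻¹) F`, so the left-hand side is
`q⁻² F - q⁻¹ F² = q⁻³ (P₂ - P₂²)`.
-/

section Hecke

variable {K A : Type*} [Field K] [Ring A] [Algebra K A] {q : K} {T P : A}

theorem sub_smul_one_mul_self_of_hecke (hT : T * T = (q - q⁻¹) • T + 1) :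
    (T - q • 1) * T = 1 - q⁻¹ • T := by
  rw [sub_mul, hT, smul_one_mul]
  module

theorem one_sub_mul_one_sub_mul_of_hecke (hT : T * T = (q - q⁻¹) • T + 1) :
    1 - T * (1 - P) * T = T * (P * T - (q - q⁻¹) • 1) := by
  rw [mul_sub, mul_one, sub_mul, hT, mul_sub, mul_smul_comm, mul_one, mul_assoc]
  abel

theorem corner_eq_smul_sub_mul_self_of_hecke (hq : q ≠ 0) (hT : T * T = (q - q⁻¹) • T + 1)
    (hP : P * P = P) :
    P * (T - q • 1) * (1 - T * (1 - P) * T) * P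
      = (q ^ 3)⁻¹ • (q • (P * T * P - (q - q⁻¹) • P)
        - q • (P * T * P - (q - q⁻¹) • P) * q • (P * T * P - (q - q⁻¹) • P)) := by
  set F := P * T * P - (q - q⁻¹) • P with hF
  have hPP : ∀ x, P * (P * x) = P * x := fun x => by rw [← mul_assoc, hP]
  have hPF : P * F = F := by
    simp only [hF, mul_sub, mul_smul_comm, ← mul_assoc, hP]
  calc P * (T - q • 1) * (1 - T * (1 - P) * T) * P
      = P * ((T - q • 1) * T) * (P * T - (q - q⁻¹) • 1) * P := by
        rw [one_sub_mul_one_sub_mul_of_hecke hT]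
        simp only [mul_assoc]
    _ = F - q⁻¹ • (P * T * F) := by
        simp only [sub_smul_one_mul_self_of_hecke hT, hF, mul_sub, sub_mul, smul_mul_assoc,
          mul_smul_comm, mul_one, mul_assoc, hPP, hP]
        module
    _ = F - q⁻¹ • (F * F + (q - q⁻¹) • F) := by
        rw [← hPF, ← mul_assoc (P * T), hPF, show P * T * P = F + (q - q⁻¹) • P by rw [hF]; abel,
          add_mul, smul_mul_assoc, hPF]
    _ = _ := by
        clear_value F
        rw [smul_mul_smul_comm]
        match_scalars <;> field_simp
        ring

end Hecke

/-- In an associative unital ℂ-algebra with `T_1² = (q - q⁻¹)T_1 + 1` and `P_1² = P_1`,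
setting `P_2 = q(P_1 T_1 P_1 - (q - q⁻¹)P_1)`, `X_1 = 1 - P_1`, `X_2 = T_1 X_1 T_1`,
we have `(1 - X_1)(T_1 - q)(1 - X_2)(1 - X_1) = q⁻³(P_2 - P_2²)`, and in particular
this expression vanishes iff `P_2² = P_2`. -/
theorem stmt6 {A : Type*} [Ring A] [Algebra ℂ A] (q : ℂ) (hq : q ≠ 0)
    (T1 P1 : A)
    (hT : T1 * T1 = (q - q⁻¹) • T1 + 1)
    (hP : P1 * P1 = P1) :
    ∀ P2 X1 X2 : A,
      P2 = q • (P1 * T1 * P1 - (q - q⁻¹) • P1) →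
      X1 = 1 - P1 → X2 = T1 * X1 * T1 →
      ((1 - X1) * (T1 - q • (1 : A)) * (1 - X2) * (1 - X1)
          = (q ^ 3)⁻¹ • (P2 - P2 * P2)) ∧
      ((1 - X1) * (T1 - q • (1 : A)) * (1 - X2) * (1 - X1) = 0 ↔ P2 * P2 = P2) := by
  intro P2 X1 X2 hP2 hX1 hX2
  have key : (1 - X1) * (T1 - q • (1 : A)) * (1 - X2) * (1 - X1)
      = (q ^ 3)⁻¹ • (P2 - P2 * P2) := by
    rw [hX2, hX1, sub_sub_cancel, hP2]
    exact corner_eq_smul_sub_mul_self_of_hecke hq hT hP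
  refine ⟨key, ?_⟩
  rw [key, smul_eq_zero_iff_right (inv_ne_zero (pow_ne_zero 3 hq)), sub_eq_zero, eq_comm]
end

section
/- Let A be an associative unital ℂ-algebra with elements T_1,…,T_{k-1}, P_1,…,P_k satisfying the Hecke relations T_i² = (q−q⁻¹)T_i + 1, braid relations T_i T_{i+1} T_i = T_{i+1} T_i T_{i+1}, commutation T_i T_j = T_j T_i for |i−j|>1, the recursion P_{i+1} = q(P_i T_i P_i − (q−q⁻¹)P_i), and suppose that for a fixed index i>1 the inductive hypotheses hold: P_i P_j = P_j P_i = P_i for 1 ≤ j < i, P_i² = P_i, P_i T_j = T_j P_i = q P_i for 1 ≤ j < i, and P_m T_j = T_j P_m for m < j. Then P_{i+1}² = P_{i+1}. -/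
/-!
Write `a = P_i`, `b = P_{i-1}`, `s = T_{i-1}`, `t = T_i` and `c = q - q⁻¹`. Pushing `t` through
`a = q(bsb - cb)` with the braid and Hecke relations, and then absorbing `b` and `s` into `a`,
shows that `x = ata` satisfies `(x - qa)(x - ca) = 0` in the corner ring `aAa`. Since
`q - c = q⁻¹`, the element `P_{i+1} = q(x - ca)` is the Lagrange idempotent of the eigenvalue `q`.
-/

theorem isIdempotentElem_smul_sub_of_mul_self_eq {R A : Type*} [CommRing R] [Ring A] [Algebra R A]
    {a x : A} {l m r : R} (ha : IsIdempotentElem a) (hax : a * x = x) (hxa : x * a = x)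
    (hx : x * x = (l + m) • x - (l * m) • a) (hr : r * (l - m) = 1) :
    IsIdempotentElem (r • (x - m • a)) := by
  have hsq : (x - m • a) * (x - m • a) = (l - m) • (x - m • a) := by
    simp only [sub_mul, mul_sub, smul_mul_assoc, mul_smul_comm, hx, hax, hxa, ha.eq]
    module
  unfold IsIdempotentElem
  rw [smul_mul_smul_comm, hsq, smul_smul, mul_assoc, hr, mul_one]

namespace Hecke

variable {R A : Type*} [CommRing R] [Ring A] [Algebra R A] {a b s t : A} {q c : R}

theorem mul_recursion_mul (hbt : b * t = t * b) (ht : t * t = c • t + 1)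
    (hbraid : s * t * s = t * s * t) (ha : a = q • (b * s * b - c • b)) :
    t * a * t = q • (b * (s * t * s) * b) - (q * c ^ 2) • (b * t) - (q * c) • b := by
  have htbt : t * b * t = b * (c • t + 1) := by rw [← hbt, mul_assoc, ht]
  have htbsbt : t * (b * s * b) * t = b * (s * t * s) * b := by
    rw [hbraid]; simp only [← mul_assoc, ← hbt]; simp only [mul_assoc, hbt]
  calc t * a * t = q • (t * (b * s * b) * t - c • (t * b * t)) := by
        rw [ha]; simp only [mul_sub, sub_mul, mul_smul_comm, smul_mul_assoc, mul_assoc]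
    _ = _ := by
        rw [htbsbt, htbt]; simp only [mul_add, mul_smul_comm, mul_one]; module

theorem sandwich_mul_self (haa : a * a = a) (hab : a * b = a) (hba : b * a = a)
    (has : a * s = q • a) (hsa : s * a = q • a) (hbt : b * t = t * b)
    (ht : t * t = c • t + 1) (hbraid : s * t * s = t * s * t)
    (ha : a = q • (b * s * b - c • b)) (hc : q * c = q ^ 2 - 1) :
    (a * t * a) * (a * t * a) = (q + c) • (a * t * a) - (q * c) • a := by
  have htat := mul_recursion_mul hbt ht hbraid ha
  have hastsa : a * (s * (t * (s * a))) = q ^ 2 • (a * (t * a)) := by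
    rw [hsa, ← mul_assoc a s, has]
    simp only [mul_smul_comm, smul_mul_assoc, smul_smul, sq]
  calc (a * t * a) * (a * t * a) = a * (t * a * t) * a := by
        simp only [mul_assoc, ← mul_assoc a a, haa]
    _ = (q * (q ^ 2 - c ^ 2)) • (a * t * a) - (q * c) • a := by
        rw [htat]
        simp only [mul_sub, sub_mul, mul_smul_comm, smul_mul_assoc, ← mul_assoc, hab]
        simp only [mul_assoc, hba, haa]
        rw [hastsa]; module
    _ = _ := by
        congr 2; linear_combination (-c - q) * hc

end Hecke

theorem stmt7_general {A : Type*} [Ring A] [Algebra ℂ A] (k : ℕ) (q : ℂ) (hq : q ≠ 0)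
    (T P : ℕ → A)
    (hA1 : ∀ m, 1 ≤ m → m + 1 ≤ k → T m * T m = (q - q⁻¹) • T m + 1)
    (hA2 : ∀ m, 1 ≤ m → m + 2 ≤ k → T m * T (m+1) * T m = T (m+1) * T m * T (m+1))
    (hrec : ∀ m, 1 ≤ m → m + 1 ≤ k → P (m+1) = q • (P m * T m * P m - (q - q⁻¹) • P m))
    (i : ℕ) (hi : 1 < i) (hik : i + 1 ≤ k)
    (hE2 : ∀ j, 1 ≤ j → j < i → P i * P j = P i ∧ P j * P i = P i)
    (hE3 : P i * P i = P i)
    (hE4 : ∀ j, 1 ≤ j → j < i → P i * T j = q • P i ∧ T j * P i = q • P i)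
    (hE1 : ∀ m j, 1 ≤ m → m < j → j + 1 ≤ k → P m * T j = T j * P m) :
    P (i+1) * P (i+1) = P (i+1) := by
  obtain ⟨j, rfl⟩ : ∃ j, i = j + 1 := ⟨i - 1, by omega⟩
  obtain ⟨hab, hba⟩ := hE2 j (by omega) (by omega)
  obtain ⟨has, hsa⟩ := hE4 j (by omega) (by omega)
  have hx := Hecke.sandwich_mul_self hE3 hab hba has hsa (hE1 j (j + 1) (by omega) (by omega) hik)
    (hA1 (j + 1) (by omega) hik) (hA2 j (by omega) (by omega)) (hrec j (by omega) (by omega))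
    (by field_simp)
  rw [hrec (j + 1) (by omega) hik]
  refine isIdempotentElem_smul_sub_of_mul_self_eq hE3 ?_ ?_ hx (by field_simp; ring)
  · rw [← mul_assoc, ← mul_assoc, hE3]
  · rw [mul_assoc, hE3]

/-- Inductive step: under the Hecke relations, the recursion
`P_{i+1} = q(P_i T_i P_i - (q - q⁻¹)P_i)`, and the inductive hypotheses
(E1)-(E4) at a fixed index `i > 1`, the element `P_{i+1}` is idempotent. -/
theorem stmt7 {A : Type*} [Ring A] [Algebra ℂ A] (k : ℕ) (q : ℂ) (hq : q ≠ 0)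
    (T P : ℕ → A)
    (hA1 : ∀ m, 1 ≤ m → m + 1 ≤ k → T m * T m = (q - q⁻¹) • T m + 1)
    (hA2 : ∀ m, 1 ≤ m → m + 2 ≤ k → T m * T (m+1) * T m = T (m+1) * T m * T (m+1))
    (hA3 : ∀ m j, 1 ≤ m → m + 1 < j → j + 1 ≤ k → T m * T j = T j * T m)
    (hrec : ∀ m, 1 ≤ m → m + 1 ≤ k → P (m+1) = q • (P m * T m * P m - (q - q⁻¹) • P m))
    (i : ℕ) (hi : 1 < i) (hik : i + 1 ≤ k)
    (hE2 : ∀ j, 1 ≤ j → j < i → P i * P j = P i ∧ P j * P i = P i)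
    (hE3 : P i * P i = P i)
    (hE4 : ∀ j, 1 ≤ j → j < i → P i * T j = q • P i ∧ T j * P i = q • P i)
    (hE1 : ∀ m j, 1 ≤ m → m < j → j + 1 ≤ k → P m * T j = T j * P m) :
    P (i+1) * P (i+1) = P (i+1) :=
  stmt7_general k q hq T P hA1 hA2 hrec i hi hik hE2 hE3 hE4 hE1
end

section
/- Let A be an associative unital ℂ-algebra with elements T_1,…,T_{k-1}, P_1,…,P_k satisfying the Hecke relations T_i² = (q−q⁻¹)T_i + 1, braid relations, distant commutation, the recursion P_{i+1} = q(P_i T_i P_i − (q−q⁻¹)P_i), and suppose for a fixed i>1: P_i P_j = P_j P_i = P_i for j < i, P_i² = P_i, P_i T_j = T_j P_i = q P_i for j < i, and P_m T_j = T_j P_m for m < j. Then P_{i+1} T_i = q P_{i+1}. -/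
/-- Inductive step (E4): under the Hecke relations, the recursion
`P_{i+1} = q(P_i T_i P_i - (q - q⁻¹)P_i)`, and the inductive hypotheses at a
fixed index `i > 1`, we have `P_{i+1} T_i = q P_{i+1}`. -/
theorem stmt8 {A : Type*} [Ring A] [Algebra ℂ A] (k : ℕ) (q : ℂ) (hq : q ≠ 0)
    (T P : ℕ → A)
    (hA1 : ∀ m, 1 ≤ m → m + 1 ≤ k → T m * T m = (q - q⁻¹) • T m + 1)
    (hA2 : ∀ m, 1 ≤ m → m + 2 ≤ k → T m * T (m+1) * T m = T (m+1) * T m * T (m+1))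
    (hA3 : ∀ m j, 1 ≤ m → m + 1 < j → j + 1 ≤ k → T m * T j = T j * T m)
    (hrec : ∀ m, 1 ≤ m → m + 1 ≤ k → P (m+1) = q • (P m * T m * P m - (q - q⁻¹) • P m))
    (i : ℕ) (hi : 1 < i) (hik : i + 1 ≤ k)
    (hE2 : ∀ j, 1 ≤ j → j < i → P i * P j = P i ∧ P j * P i = P i)
    (hE3 : P i * P i = P i)
    (hE4 : ∀ j, 1 ≤ j → j < i → P i * T j = q • P i ∧ T j * P i = q • P i)
    (hE1 : ∀ m j, 1 ≤ m → m < j → j + 1 ≤ k → P m * T j = T j * P m) :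
    P (i+1) * T i = q • P (i+1) := by
  obtain ⟨m, rfl⟩ : ∃ m, i = m + 1 := ⟨i - 1, by omega⟩
  have hm1 : 1 ≤ m := by omega
  have hTi : T (m+1) * T (m+1) = (q - q⁻¹) • T (m+1) + 1 := hA1 (m+1) (by omega) (by omega)
  have hbraid : T m * (T (m+1) * T m) = T (m+1) * (T m * T (m+1)) := by
    have := hA2 m hm1 (by omega); simpa [mul_assoc] using this
  have hrec2 : P (m+1+1) = q • (P (m+1) * T (m+1) * P (m+1) - (q - q⁻¹) • P (m+1)) :=
    hrec (m+1) (by omega) (by omega)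
  have hrec1 : P (m+1) = q • (P m * T m * P m - (q - q⁻¹) • P m) := hrec m hm1 (by omega)
  obtain ⟨hPP1, hPP2⟩ := hE2 m hm1 (by omega)
  obtain ⟨hPT1, hPT2⟩ := hE4 m hm1 (by omega)
  have hcomm : P m * T (m+1) = T (m+1) * P m := hE1 m (m+1) hm1 (by omega) (by omega)
  set c : ℂ := q - q⁻¹ with hc
  set Pi := P (m+1) with hPi
  set Ti := T (m+1) with hTidef
  set Pm := P m with hPm
  set Tm := T m with hTm
  -- P m * T m * P m = q⁻¹ • Pi + c • Pm
  have h0 : Pm * (Tm * Pm) = q⁻¹ • Pi + c • Pm := by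
    rw [hrec1, smul_smul, inv_mul_cancel₀ hq, one_smul, ← mul_assoc, sub_add_cancel]
  have hL1 : Pi * (Ti * Pm) = Pi * Ti := by
    rw [← hcomm, ← mul_assoc, hPP1]
  -- Term1 : Pi * Ti * (Pm * Tm * Pm) * Ti
  have hT1 : Pi * (Ti * (Pm * (Tm * (Pm * Ti)))) = Pi * (Ti * Pi) + (q*c) • (Pi * Ti) := by
    calc Pi * (Ti * (Pm * (Tm * (Pm * Ti))))
        = Pi * (Ti * (Pm * (Tm * (Ti * Pm)))) := by rw [hcomm]
      _ = (Pi * (Ti * Pm)) * (Tm * (Ti * Pm)) := by simp only [mul_assoc]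
      _ = (Pi * Ti) * (Tm * (Ti * Pm)) := by rw [hL1]
      _ = Pi * (Ti * (Tm * Ti)) * Pm := by simp only [mul_assoc]
      _ = Pi * (Tm * (Ti * Tm)) * Pm := by rw [← hbraid]
      _ = ((Pi * Tm) * (Ti * Tm)) * Pm := by simp only [mul_assoc]
      _ = ((q • Pi) * (Ti * Tm)) * Pm := by rw [hPT1]
      _ = q • (Pi * (Ti * (Tm * Pm))) := by simp only [smul_mul_assoc, mul_assoc]
      _ = q • ((Pi * (Ti * Pm)) * (Tm * Pm)) := by rw [hL1]; simp only [mul_assoc]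
      _ = q • (Pi * (Ti * (Pm * (Tm * Pm)))) := by simp only [mul_assoc]
      _ = q • (Pi * (Ti * (q⁻¹ • Pi + c • Pm))) := by rw [h0]
      _ = q • (q⁻¹ • (Pi * (Ti * Pi)) + c • (Pi * (Ti * Pm))) := by
            simp only [mul_add, mul_smul_comm]
      _ = q • (q⁻¹ • (Pi * (Ti * Pi)) + c • (Pi * Ti)) := by rw [hL1]
      _ = Pi * (Ti * Pi) + (q*c) • (Pi * Ti) := by
            rw [smul_add, smul_smul, mul_inv_cancel₀ hq, one_smul, smul_smul]
  -- Term2 : Pi * Ti * Pm * Ti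
  have hT2 : Pi * (Ti * (Pm * Ti)) = c • (Pi * Ti) + Pi := by
    calc Pi * (Ti * (Pm * Ti)) = Pi * (Ti * (Ti * Pm)) := by rw [hcomm]
      _ = (Pi * (Ti * Ti)) * Pm := by simp only [mul_assoc]
      _ = (Pi * (c • Ti + 1)) * Pm := by rw [hTi]
      _ = c • (Pi * (Ti * Pm)) + Pi * Pm := by
            simp only [mul_add, mul_one, add_mul, smul_mul_assoc, mul_smul_comm, mul_assoc]
      _ = c • (Pi * Ti) + Pi := by rw [hL1, hPP1]
  -- key: X = Pi Ti Pi Ti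
  have hX : Pi * (Ti * (Pi * Ti)) = q • (Pi * (Ti * Pi)) + c • (Pi * Ti) - (q*c) • Pi := by
    calc Pi * (Ti * (Pi * Ti))
        = Pi * (Ti * ((q • (Pm * Tm * Pm - c • Pm)) * Ti)) := by rw [← hrec1]
      _ = q • (Pi * (Ti * (Pm * (Tm * (Pm * Ti))))) - (q*c) • (Pi * (Ti * (Pm * Ti))) := by
            simp only [smul_mul_assoc, sub_mul, smul_sub, mul_sub, mul_smul_comm, smul_smul,
              mul_assoc]
      _ = q • (Pi * (Ti * Pi) + (q*c) • (Pi * Ti)) - (q*c) • (c • (Pi * Ti) + Pi) := by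
            rw [hT1, hT2]
      _ = q • (Pi * (Ti * Pi)) + c • (Pi * Ti) - (q*c) • Pi := by
            match_scalars <;> try ring
            · linear_combination (-c*q) * hc + c * (mul_inv_cancel₀ hq)
  -- final
  rw [hrec2]
  calc (q • (Pi * Ti * Pi - c • Pi)) * Ti
      = q • (Pi * (Ti * (Pi * Ti))) - (q*c) • (Pi * Ti) := by
        simp only [smul_mul_assoc, sub_mul, smul_sub, smul_smul, mul_assoc]
    _ = q • (q • (Pi * (Ti * Pi)) + c • (Pi * Ti) - (q*c) • Pi) - (q*c) • (Pi * Ti) := by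
        rw [hX]
    _ = q • (q • (Pi * Ti * Pi - c • Pi)) := by
        simp only [mul_assoc]; match_scalars <;> ring
end

section
/- The operators defined on the span of standard tableaux of a skew shape λ/μ by T_i v_L = (CT(L(i+1))(q−q⁻¹)/(CT(L(i+1))−CT(L(i)))) v_L + (q⁻¹ + CT(L(i+1))(q−q⁻¹)/(CT(L(i+1))−CT(L(i)))) v_{s_iL} satisfy the quadratic relation T_i² = (q−q⁻¹)T_i + 1. -/
/-- A standard tableau of skew shape `λ/μ` with `k` boxes: `pos m` is the box
(row, column), 1-indexed, containing the entry `m`, for `1 ≤ m ≤ k`. -/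
structure StdTab (k : ℕ) (lam mu : ℕ → ℕ) where
  pos : ℕ → ℕ × ℕ
  inj : Set.InjOn pos (Set.Icc 1 k)
  mem_box : ∀ b : ℕ × ℕ,
    (1 ≤ b.1 ∧ mu b.1 < b.2 ∧ b.2 ≤ lam b.1) ↔ b ∈ pos '' (Set.Icc 1 k)
  row_inc : ∀ i ∈ Set.Icc 1 k, ∀ j ∈ Set.Icc 1 k,
    (pos i).1 = (pos j).1 → (pos i).2 < (pos j).2 → i < j
  col_inc : ∀ i ∈ Set.Icc 1 k, ∀ j ∈ Set.Icc 1 k,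
    (pos i).2 = (pos j).2 → (pos i).1 < (pos j).1 → i < j
  junk : ∀ m, m ∉ Set.Icc 1 k → pos m = (0, 0)

/-- The content `CT(b) = q^{2(c-r)}` of a box in row `r`, column `c`. -/
noncomputable def CT (q : ℂ) (b : ℕ × ℕ) : ℂ := q ^ (2 * ((b.2 : ℤ) - (b.1 : ℤ)))

/-- The diagonal coefficient `(T_i)_{LL} = CT(L(i+1))(q-q⁻¹)/(CT(L(i+1)) - CT(L(i)))`. -/
noncomputable def diagCoeff (k : ℕ) (lam mu : ℕ → ℕ) (q : ℂ) (i : ℕ)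
    (L : StdTab k lam mu) : ℂ :=
  CT q (L.pos (i+1)) * (q - q⁻¹) / (CT q (L.pos (i+1)) - CT q (L.pos i))

open Classical in
/-- The operator `T_i` on the span of standard tableaux:
`T_i v_L = (T_i)_{LL} v_L + (q⁻¹ + (T_i)_{LL}) v_{s_iL}`, where `s_iL` is `L` with
the entries `i` and `i+1` exchanged, and `v_{s_iL} = 0` if `s_iL` is not standard.
(Expressed on coordinate functions with respect to the basis `{v_L}`.) -/
noncomputable def TOp (k : ℕ) (lam mu : ℕ → ℕ) (q : ℂ) (i : ℕ) :
    (StdTab k lam mu → ℂ) → (StdTab k lam mu → ℂ) :=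
  fun f L =>
    diagCoeff k lam mu q i L * f L +
    if h : ∃ M : StdTab k lam mu, M.pos = L.pos ∘ (Equiv.swap i (i+1)) then
      (q⁻¹ + diagCoeff k lam mu q i h.choose) * f h.choose
    else 0

theorem StdTab.ext' {k lam mu} {L M : StdTab k lam mu} (h : L.pos = M.pos) : L = M := by
  cases L; cases M; simp_all

lemma swap_lt_swap {i a b : ℕ} (h : a < b) (hne : ¬(a = i ∧ b = i + 1)) :
    Equiv.swap i (i+1) a < Equiv.swap i (i+1) b := by
  simp only [Equiv.swap_apply_def]
  split_ifs <;> omega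

lemma swap_mem_Icc {k i : ℕ} (hi : 1 ≤ i) (hik : i + 1 ≤ k) {m : ℕ}
    (hm : m ∈ Set.Icc 1 k) : Equiv.swap i (i+1) m ∈ Set.Icc 1 k := by
  simp only [Equiv.swap_apply_def]
  simp only [Set.mem_Icc] at *
  split_ifs <;> omega


lemma exists_swapTab {k : ℕ} {lam mu : ℕ → ℕ} (L : StdTab k lam mu) (i : ℕ)
    (hi : 1 ≤ i) (hik : i+1 ≤ k)
    (hr : (L.pos i).1 ≠ (L.pos (i+1)).1) (hc : (L.pos i).2 ≠ (L.pos (i+1)).2) :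
    ∃ M : StdTab k lam mu, M.pos = L.pos ∘ (Equiv.swap i (i+1)) := by
  have himg : (Equiv.swap i (i+1)) '' (Set.Icc 1 k) = Set.Icc 1 k := by
    ext m
    constructor
    · rintro ⟨a, ha, rfl⟩; exact swap_mem_Icc hi hik ha
    · intro hm
      exact ⟨Equiv.swap i (i+1) m, swap_mem_Icc hi hik hm, Equiv.swap_apply_self _ _ _⟩
  refine ⟨⟨L.pos ∘ Equiv.swap i (i+1), ?_, ?_, ?_, ?_, ?_⟩, rfl⟩
  · intro a ha b hb hab
    have := L.inj (swap_mem_Icc hi hik ha) (swap_mem_Icc hi hik hb) hab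
    exact (Equiv.swap i (i+1)).injective this
  · intro b
    rw [Set.image_comp, himg]
    exact L.mem_box b
  · intro a ha b hb h1 h2
    have hlt := L.row_inc _ (swap_mem_Icc hi hik ha) _ (swap_mem_Icc hi hik hb) h1 h2
    have hne : ¬(Equiv.swap i (i+1) a = i ∧ Equiv.swap i (i+1) b = i + 1) := by
      rintro ⟨e1, e2⟩
      simp only [Function.comp_apply, e1, e2] at h1
      exact hr h1
    have := swap_lt_swap hlt hne
    simpa [Equiv.swap_apply_self] using this
  · intro a ha b hb h1 h2
    have hlt := L.col_inc _ (swap_mem_Icc hi hik ha) _ (swap_mem_Icc hi hik hb) h1 h2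
    have hne : ¬(Equiv.swap i (i+1) a = i ∧ Equiv.swap i (i+1) b = i + 1) := by
      rintro ⟨e1, e2⟩
      simp only [Function.comp_apply, e1, e2] at h1
      exact hc h1
    have := swap_lt_swap hlt hne
    simpa [Equiv.swap_apply_self] using this
  · intro m hm
    have h1 : m ≠ i := by rintro rfl; exact hm ⟨hi, by omega⟩
    have h2 : m ≠ i+1 := by rintro rfl; exact hm ⟨by omega, hik⟩
    simp only [Function.comp_apply, Equiv.swap_apply_of_ne_of_ne h1 h2]
    exact L.junk m hm

lemma row_adj {k : ℕ} {lam mu : ℕ → ℕ} (L : StdTab k lam mu) (i : ℕ)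
    (hi : 1 ≤ i) (hik : i+1 ≤ k)
    (hr : (L.pos i).1 = (L.pos (i+1)).1) :
    L.pos (i+1) = ((L.pos i).1, (L.pos i).2 + 1) := by
  have hii : i ∈ Set.Icc 1 k := ⟨hi, by omega⟩
  have hii1 : i+1 ∈ Set.Icc 1 k := ⟨by omega, hik⟩
  have hbi := (L.mem_box (L.pos i)).mpr ⟨i, hii, rfl⟩
  have hbi1 := (L.mem_box (L.pos (i+1))).mpr ⟨i+1, hii1, rfl⟩
  have hne : L.pos i ≠ L.pos (i+1) := by
    intro h; have := L.inj hii hii1 h; omega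
  have hcne : (L.pos i).2 ≠ (L.pos (i+1)).2 := by
    intro h; exact hne (Prod.ext hr h)
  have hclt : (L.pos i).2 < (L.pos (i+1)).2 := by
    rcases lt_or_gt_of_ne hcne with h | h
    · exact h
    · have := L.row_inc _ hii1 _ hii hr.symm h; omega
  by_cases hadj : (L.pos (i+1)).2 = (L.pos i).2 + 1
  · exact Prod.ext hr.symm hadj
  · exfalso
    have hbox : 1 ≤ (L.pos i).1 ∧ mu (L.pos i).1 < (L.pos i).2 + 1 ∧
        (L.pos i).2 + 1 ≤ lam (L.pos i).1 := by
      refine ⟨hbi.1, by omega, ?_⟩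
      have := hbi1.2.2
      rw [← hr] at this
      omega
    obtain ⟨m, hm, hpm⟩ := (L.mem_box ((L.pos i).1, (L.pos i).2 + 1)).mp hbox
    have h1 : i < m := by
      apply L.row_inc _ hii _ hm
      · rw [hpm]
      · rw [hpm]; omega
    have h2 : m < i + 1 := by
      apply L.row_inc _ hm _ hii1
      · rw [hpm]; exact hr
      · rw [hpm]; omega
    omega

lemma col_adj {k : ℕ} {lam mu : ℕ → ℕ}
    (hlam : ∀ r, lam (r+1) ≤ lam r) (hmu : ∀ r, mu (r+1) ≤ mu r)
    (L : StdTab k lam mu) (i : ℕ)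
    (hi : 1 ≤ i) (hik : i+1 ≤ k)
    (hc : (L.pos i).2 = (L.pos (i+1)).2) :
    L.pos (i+1) = ((L.pos i).1 + 1, (L.pos i).2) := by
  have hii : i ∈ Set.Icc 1 k := ⟨hi, by omega⟩
  have hii1 : i+1 ∈ Set.Icc 1 k := ⟨by omega, hik⟩
  have hbi := (L.mem_box (L.pos i)).mpr ⟨i, hii, rfl⟩
  have hbi1 := (L.mem_box (L.pos (i+1))).mpr ⟨i+1, hii1, rfl⟩
  have hne : L.pos i ≠ L.pos (i+1) := by
    intro h; have := L.inj hii hii1 h; omega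
  have hrne : (L.pos i).1 ≠ (L.pos (i+1)).1 := by
    intro h; exact hne (Prod.ext h hc)
  have hrlt : (L.pos i).1 < (L.pos (i+1)).1 := by
    rcases lt_or_gt_of_ne hrne with h | h
    · exact h
    · have := L.col_inc _ hii1 _ hii hc.symm h; omega
  by_cases hadj : (L.pos (i+1)).1 = (L.pos i).1 + 1
  · exact Prod.ext hadj hc.symm
  · exfalso
    -- box ((L.pos i).1 + 1, (L.pos i).2) is in the shape
    have hbox : 1 ≤ (L.pos i).1 + 1 ∧ mu ((L.pos i).1 + 1) < (L.pos i).2 ∧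
        (L.pos i).2 ≤ lam ((L.pos i).1 + 1) := by
      refine ⟨by omega, ?_, ?_⟩
      · -- mu ((r)+1) ≤ mu r < c
        have := hmu (L.pos i).1
        have := hbi.2.1
        omega
      · -- c = c' ≤ lam r', and r+1 ≤ r' so lam r' ≤ lam (r+1)
        have hlam' : lam ((L.pos (i+1)).1) ≤ lam ((L.pos i).1 + 1) := by
          have : (L.pos i).1 + 1 ≤ (L.pos (i+1)).1 := by omega
          clear hbi hbi1
          -- lam antitone
          have hmono : ∀ a b : ℕ, a ≤ b → lam b ≤ lam a := by
            intro a b hab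
            induction b with
            | zero => simp [Nat.le_zero.mp hab]
            | succ n ih =>
              rcases Nat.lt_or_ge a (n+1) with h | h
              · exact le_trans (hlam n) (ih (by omega))
              · have : a = n + 1 := by omega
                simp [this]
          exact hmono _ _ this
        have := hbi1.2.2
        rw [← hc] at this
        omega
    obtain ⟨m, hm, hpm⟩ := (L.mem_box ((L.pos i).1 + 1, (L.pos i).2)).mp hbox
    have h1 : i < m := by
      apply L.col_inc _ hii _ hm
      · rw [hpm]
      · rw [hpm]; omega
    have h2 : m < i + 1 := by
      apply L.col_inc _ hm _ hii1
      · rw [hpm]; exact hc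
      · rw [hpm]; omega
    omega

lemma alg_pos (q x y u v : ℂ) (hq : q ≠ 0) (hxy : x ≠ y) :
    y*(q-q⁻¹)/(y-x) * (y*(q-q⁻¹)/(y-x) * u + (q⁻¹ + x*(q-q⁻¹)/(x-y)) * v)
      + (q⁻¹ + x*(q-q⁻¹)/(x-y)) * (x*(q-q⁻¹)/(x-y) * v + (q⁻¹ + y*(q-q⁻¹)/(y-x)) * u)
    = (q-q⁻¹) * (y*(q-q⁻¹)/(y-x) * u + (q⁻¹ + x*(q-q⁻¹)/(x-y)) * v) + u := by
  have h1 : y - x ≠ 0 := sub_ne_zero.mpr (Ne.symm hxy)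
  have h2 : x - y ≠ 0 := sub_ne_zero.mpr hxy
  have hab : x*(q-q⁻¹)/(x-y) = (q - q⁻¹) - y*(q-q⁻¹)/(y-x) := by
    field_simp
    ring
  rw [hab]
  set a := y*(q-q⁻¹)/(y-x) with ha
  have hqq : q * q⁻¹ = 1 := mul_inv_cancel₀ hq
  have hq' : q⁻¹ = q⁻¹ := rfl
  field_simp
  ring


lemma alg_row (q x u : ℂ) (hq : q ≠ 0) (hx : x ≠ 0) (hne : x ≠ q*q*x) :
    q*q*x*(q-q⁻¹)/(q*q*x-x) * (q*q*x*(q-q⁻¹)/(q*q*x-x) * u + 0) + 0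
      = (q-q⁻¹) * (q*q*x*(q-q⁻¹)/(q*q*x-x) * u + 0) + u := by
  have h1 : q*q*x - x ≠ 0 := sub_ne_zero.mpr (Ne.symm hne)
  have h2 : q^2 - 1 ≠ 0 := by intro h; apply hne; linear_combination (-x) * h
  field_simp
  ring


lemma alg_col (q y u : ℂ) (hq : q ≠ 0) (hy : y ≠ 0) (hne : q*q*y ≠ y) :
    y*(q-q⁻¹)/(y-q*q*y) * (y*(q-q⁻¹)/(y-q*q*y) * u + 0) + 0
      = (q-q⁻¹) * (y*(q-q⁻¹)/(y-q*q*y) * u + 0) + u := by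
  have h1 : y - q*q*y ≠ 0 := sub_ne_zero.mpr (Ne.symm hne)
  have h2 : 1 - q^2 ≠ 0 := by intro h; apply hne; linear_combination (-y) * h
  field_simp
  ring


lemma CT_ne_zero (q : ℂ) (hq : q ≠ 0) (b : ℕ × ℕ) : CT q b ≠ 0 :=
  zpow_ne_zero _ hq

lemma CT_right (q : ℂ) (hq : q ≠ 0) (b : ℕ × ℕ) :
    CT q (b.1, b.2 + 1) = q * q * CT q b := by
  simp only [CT]
  have h : (2 * (((b.2 + 1 : ℕ) : ℤ) - (b.1 : ℤ))) = 1 + (1 + 2 * ((b.2 : ℤ) - b.1)) := by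
    push_cast; ring
  rw [h, zpow_add₀ hq, zpow_add₀ hq, zpow_one]
  ring

lemma CT_down (q : ℂ) (hq : q ≠ 0) (b : ℕ × ℕ) :
    CT q b = q * q * CT q (b.1 + 1, b.2) := by
  simp only [CT]
  have h : (2 * ((b.2 : ℤ) - (b.1 : ℤ))) = 1 + (1 + 2 * ((b.2 : ℤ) - ((b.1 + 1 : ℕ) : ℤ))) := by
    push_cast; ring
  rw [h, zpow_add₀ hq, zpow_add₀ hq, zpow_one]
  ring

/-- The operators `T_i` satisfy the quadratic relation `T_i² = (q - q⁻¹) T_i + 1`. -/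
theorem stmt11 (k : ℕ) (lam mu : ℕ → ℕ) (q : ℂ) (hq : q ≠ 0)
    (hlam : ∀ r, lam (r+1) ≤ lam r) (hmu : ∀ r, mu (r+1) ≤ mu r)
    (hsub : ∀ r, mu r ≤ lam r)
    (hfact : ∀ m, 1 ≤ m → m ≤ k → (∑ j ∈ Finset.range m, q ^ (2*j)) ≠ 0)
    (hCT : ∀ (L : StdTab k lam mu) (i : ℕ), 1 ≤ i → i + 1 ≤ k →
      CT q (L.pos i) ≠ CT q (L.pos (i+1))) :
    ∀ i, 1 ≤ i → i + 1 ≤ k → ∀ f,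
      TOp k lam mu q i (TOp k lam mu q i f)
        = (q - q⁻¹) • TOp k lam mu q i f + f := by
  intro i hi hik f
  funext L
  have hxy : CT q (L.pos i) ≠ CT q (L.pos (i+1)) := hCT L i hi hik
  have hx0 : CT q (L.pos i) ≠ 0 := CT_ne_zero q hq _
  have hy0 : CT q (L.pos (i+1)) ≠ 0 := CT_ne_zero q hq _
  simp only [TOp, Pi.add_apply, Pi.smul_apply, smul_eq_mul]
  by_cases h : ∃ M : StdTab k lam mu, M.pos = L.pos ∘ Equiv.swap i (i+1)
  · have hM := h.choose_spec
    have hMi : h.choose.pos i = L.pos (i+1) := by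
      rw [hM]; simp
    have hMi1 : h.choose.pos (i+1) = L.pos i := by
      rw [hM]; simp
    have h' : ∃ M' : StdTab k lam mu, M'.pos = h.choose.pos ∘ Equiv.swap i (i+1) :=
      ⟨L, by rw [hM]; funext m; simp [Equiv.swap_apply_self]⟩
    have hL : h'.choose = L := by
      apply StdTab.ext'
      rw [h'.choose_spec, hM]
      funext m; simp [Equiv.swap_apply_self]
    rw [dif_pos h, dif_pos h, dif_pos h', hL]
    simp only [diagCoeff, hMi, hMi1]
    exact alg_pos q (CT q (L.pos i)) (CT q (L.pos (i+1))) (f L) (f h.choose) hq hxy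
  · rw [dif_neg h, dif_neg h]
    have hcase : (L.pos i).1 = (L.pos (i+1)).1 ∨ (L.pos i).2 = (L.pos (i+1)).2 := by
      by_contra hcon
      push_neg at hcon
      exact h (exists_swapTab L i hi hik hcon.1 hcon.2)
    rcases hcase with hr | hc
    · have hadj := row_adj L i hi hik hr
      have hy : CT q (L.pos (i+1)) = q * q * CT q (L.pos i) := by
        rw [hadj]; exact CT_right q hq _
      simp only [diagCoeff, hy]
      exact alg_row q (CT q (L.pos i)) (f L) hq hx0 (by rw [← hy]; exact hxy)
    · have hadj := col_adj hlam hmu L i hi hik hc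
      have hx : CT q (L.pos i) = q * q * CT q (L.pos (i+1)) := by
        rw [hadj]; exact CT_down q hq _
      simp only [diagCoeff, hx]
      exact alg_col q (CT q (L.pos (i+1))) (f L) hq hy0 (by rw [← hx]; exact hxy)
end

section
/- Let V = V_1 ⊕ V_2 with V_1 = ℂv_0 one-dimensional and V_2 = ℂ-span{v_1,…,v_n}, let d: V → V act by d(v_0) = 0 and d(v_i) = v_i for i ≥ 1, and let Ř_i, Š_i be as in the Sakamoto–Shoji construction on V^{⊗k}. Then Ř_1⁻¹⋯Ř_{k-1}⁻¹ Š_{k-1}⋯Š_1 d_1 = d_1, i.e., the Sakamoto–Shoji operator Φ_P(X_1) equals the diagonal operator d_1 acting on the first tensor factor. -/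
/- `V = ℂ-span{v_0, v_1, …, v_n}`, where `v_0` spans `V_1` (degree 1) and
`v_1, …, v_n` span `V_2` (degree 2).  We identify basis vectors of `V` with
elements of `Fin (n+1)` (`0` corresponds to `v_0`), and model `V^{⊗k}` via
coordinate functions on words. -/

/-- The gl(n+1) R-matrix operator `Ř_i` on the `i`-th and `(i+1)`-th factors. -/
noncomputable def Rword (n : ℕ) (q : ℂ) (i : ℕ) :
    ((ℕ → Fin (n+1)) → ℂ) → ((ℕ → Fin (n+1)) → ℂ) :=
  fun f w =>
    if w i = w (i+1) then q * f w
    else if w i < w (i+1) then f (w ∘ Equiv.swap i (i+1)) + (q - q⁻¹) * f w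
    else f (w ∘ Equiv.swap i (i+1))

/-- The inverse `Ř_i⁻¹ = Ř_i - (q - q⁻¹)`, from the quadratic relation. -/
noncomputable def RwordInv (n : ℕ) (q : ℂ) (i : ℕ) :
    ((ℕ → Fin (n+1)) → ℂ) → ((ℕ → Fin (n+1)) → ℂ) :=
  fun f => Rword n q i f - (q - q⁻¹) • f

/-- `Š_i`: acts as `Ř_i` when the two factors have the same degree
(both `v_0` or both in `V_2`), and as the flip otherwise. -/
noncomputable def Sword (n : ℕ) (q : ℂ) (i : ℕ) :
    ((ℕ → Fin (n+1)) → ℂ) → ((ℕ → Fin (n+1)) → ℂ) :=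
  fun f w =>
    if (w i = 0 ↔ w (i+1) = 0) then Rword n q i f w
    else f (w ∘ Equiv.swap i (i+1))

/-- `d_1`: the operator `d ⊗ id^{⊗(k-1)}` where `d(v_0) = 0` (`u_1 = 0`) and
`d(v_j) = v_j` for `j ≥ 1` (`u_2 = 1`). -/
def dOne (n : ℕ) : ((ℕ → Fin (n+1)) → ℂ) → ((ℕ → Fin (n+1)) → ℂ) :=
  fun f w => if w 1 = 0 then 0 else f w

/-- `ascComp F m = F 1 ∘ F 2 ∘ ⋯ ∘ F m`. -/
def ascComp {α : Type*} (F : ℕ → α → α) : ℕ → α → α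
  | 0 => id
  | m + 1 => ascComp F m ∘ F (m + 1)

/-- `descComp F m = F m ∘ F (m-1) ∘ ⋯ ∘ F 1`. -/
def descComp {α : Type*} (F : ℕ → α → α) : ℕ → α → α
  | 0 => id
  | m + 1 => F (m + 1) ∘ descComp F m

/-! Words with `v_0` in the first position are killed by `d_1`. Inductively, the image of
`Š_j ⋯ Š_1 d_1` has no component with `v_0` in position `j + 1`, and on such vectors `Š_{j+1}`
coincides with `Ř_{j+1}`. Hence `Š_{k-1} ⋯ Š_1 d_1 = Ř_{k-1} ⋯ Ř_1 d_1`, and the `Ř_i⁻¹` cancel. -/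

theorem Function.LeftInverse.ascComp_descComp {α : Type*} {F G : ℕ → α → α}
    (h : ∀ i, Function.LeftInverse (G i) (F i)) :
    ∀ m, Function.LeftInverse (ascComp G m) (descComp F m)
  | 0 => fun _ => rfl
  | m + 1 => fun x => by
      simp only [ascComp, descComp, Function.comp_apply, h (m + 1) _,
        Function.LeftInverse.ascComp_descComp h m x]

section
variable {n : ℕ} (q : ℂ)

lemma Rword_apply_of_eq (i : ℕ) (f : (ℕ → Fin (n+1)) → ℂ) {w : ℕ → Fin (n+1)}
    (h : w i = w (i+1)) : Rword n q i f w = q * f w := by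
  simp [Rword, h]

lemma Rword_apply_of_lt (i : ℕ) (f : (ℕ → Fin (n+1)) → ℂ) {w : ℕ → Fin (n+1)}
    (h : w i < w (i+1)) :
    Rword n q i f w = f (w ∘ Equiv.swap i (i+1)) + (q - q⁻¹) * f w := by
  simp [Rword, h.ne, h]

lemma Rword_apply_of_gt (i : ℕ) (f : (ℕ → Fin (n+1)) → ℂ) {w : ℕ → Fin (n+1)}
    (h : w (i+1) < w i) : Rword n q i f w = f (w ∘ Equiv.swap i (i+1)) := by
  simp [Rword, h.ne', h.not_gt]

theorem RwordInv_Rword {q : ℂ} (hq : q ≠ 0) (i : ℕ) :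
    Function.LeftInverse (RwordInv n q i) (Rword n q i) := by
  intro f
  funext w
  have hswap : (w ∘ Equiv.swap i (i+1)) ∘ Equiv.swap i (i+1) = w := by
    funext x; simp [Equiv.swap_apply_self]
  simp only [RwordInv, Pi.sub_apply, Pi.smul_apply, smul_eq_mul]
  rcases lt_trichotomy (w i) (w (i+1)) with h | h | h
  · rw [Rword_apply_of_lt q i _ h, Rword_apply_of_gt q i f (by simpa using h), hswap]
    ring
  · rw [Rword_apply_of_eq q i _ h, Rword_apply_of_eq q i f h]
    field_simp
    ring
  · rw [Rword_apply_of_gt q i _ h, Rword_apply_of_lt q i f (by simpa using h), hswap,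
      Rword_apply_of_gt q i f h]
    ring

/-- The coefficient function `f` has no component with `v_0` in the `i`-th tensor factor. -/
def VanishesAtZero (i : ℕ) (f : (ℕ → Fin (n+1)) → ℂ) : Prop :=
  ∀ w : ℕ → Fin (n+1), w i = 0 → f w = 0

lemma dOne_vanishesAtZero (f : (ℕ → Fin (n+1)) → ℂ) : VanishesAtZero 1 (dOne n f) := by
  intro w hw
  simp [dOne, hw]

/-- On `V_2 ⊗ v_0` the flip agrees with `Ř_i`; on `v_0 ⊗ V_2` it differs from `Ř_i` by a multiple
of a coefficient with `v_0` in position `i`. -/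
lemma Sword_eq_Rword {i : ℕ} {f : (ℕ → Fin (n+1)) → ℂ} (hf : VanishesAtZero i f) :
    Sword n q i f = Rword n q i f := by
  funext w
  by_cases hdeg : (w i = 0 ↔ w (i+1) = 0)
  · simp [Sword, hdeg]
  simp only [Sword, if_neg hdeg]
  by_cases h0 : w i = 0
  · have hlt : w i < w (i+1) := by
      rw [h0, Fin.pos_iff_ne_zero]; exact fun h => hdeg ⟨fun _ => h, fun _ => h0⟩
    rw [Rword_apply_of_lt q i f hlt, hf w h0, mul_zero, add_zero]
  · have hgt : w (i+1) < w i := by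
      have h1 : w (i+1) = 0 := by tauto
      rw [h1, Fin.pos_iff_ne_zero]; exact h0
    rw [Rword_apply_of_gt q i f hgt]

lemma Rword_vanishesAtZero_succ {i : ℕ} {f : (ℕ → Fin (n+1)) → ℂ} (hf : VanishesAtZero i f) :
    VanishesAtZero (i+1) (Rword n q i f) := by
  intro w hw
  by_cases h : w i = w (i+1)
  · rw [Rword_apply_of_eq q i f h, hf w (h.trans hw), mul_zero]
  · have hgt : w (i+1) < w i := by
      rw [hw, Fin.pos_iff_ne_zero]; exact fun h0 => h (h0.trans hw.symm)
    rw [Rword_apply_of_gt q i f hgt]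
    exact hf _ (by simp [hw])

lemma descComp_Rword_vanishesAtZero {f : (ℕ → Fin (n+1)) → ℂ} (hf : VanishesAtZero 1 f) :
    ∀ m, VanishesAtZero (m+1) (descComp (Rword n q) m f)
  | 0 => hf
  | m + 1 => Rword_vanishesAtZero_succ q (descComp_Rword_vanishesAtZero hf m)

lemma descComp_Sword_eq_descComp_Rword {f : (ℕ → Fin (n+1)) → ℂ} (hf : VanishesAtZero 1 f) :
    ∀ m, descComp (Sword n q) m f = descComp (Rword n q) m f
  | 0 => rfl
  | m + 1 => by
      simp only [descComp, Function.comp_apply, descComp_Sword_eq_descComp_Rword hf m]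
      exact Sword_eq_Rword q (descComp_Rword_vanishesAtZero q hf m)

end

/-- The Sakamoto–Shoji operator
`Φ_P(X_1) = Ř_1⁻¹ ⋯ Ř_{k-1}⁻¹ Š_{k-1} ⋯ Š_1 d_1` equals `d_1`. -/
theorem stmt17 (n k : ℕ) (q : ℂ) (hq : q ≠ 0) :
    ascComp (RwordInv n q) (k - 1) ∘ descComp (Sword n q) (k - 1) ∘ dOne n
      = dOne n := by
  funext f
  rw [Function.comp_apply, Function.comp_apply,
    descComp_Sword_eq_descComp_Rword q (dOne_vanishesAtZero f),
    Function.LeftInverse.ascComp_descComp (RwordInv_Rword hq) (k - 1)]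
end
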